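/- Let all the standing assumptions hold, including (Reg), (Twist), (Nondeg), (MTW₊) and the c-convexity assumptions. Fix an index 1 ≤ i ≤ K, d = (d₁,…,d_K) with all d_k > 0, and real numbers f, δ with 0 < f < 1 and δ > 0. If G^i(d) ≤ f − δ, then there exists d̄ᵢ with 0 < d̄ᵢ < dᵢ such that f < G^i(d₁,…,d̄ᵢ,…,d_K) < f + δ. -/

import Mathlib

open MeasureTheory Set Filter Topology Function
open scoped RealInnerProductSpace ENNReal NNReal Classical

noncomputable section

/-- `d`-dimensional Euclidean space. -/
abbrev Euc (d : ℕ) : Type := EuclideanSpace ℝ (Fin d)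

/-- Gradient of the cost in the first variable: Dc(x,x̄). -/
def Dc {d : ℕ} (c : Euc d → Euc d → ℝ) (x y : Euc d) : Euc d :=
  gradient (fun x' => c x' y) x

/-- Gradient of the cost in the second variable: D̄c(x,x̄). -/
def Dbc {d : ℕ} (c : Euc d → Euc d → ℝ) (x y : Euc d) : Euc d :=
  gradient (fun y' => c x y') y

/-- (Reg): the cost is C⁴ on cl(Ω) × cl(Ω̄). -/
def Reg {d : ℕ} (c : Euc d → Euc d → ℝ) (Om Omb : Set (Euc d)) : Prop :=
  ContDiffOn ℝ 4 (fun p : Euc d × Euc d => c p.1 p.2) (closure Om ×ˢ closure Omb)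

/-- (Twist): x̄ ↦ −Dc(x₀,x̄) is injective on cl(Ω̄) and x ↦ −D̄c(x,x̄₀) is injective on cl(Ω). -/
def Twist {d : ℕ} (c : Euc d → Euc d → ℝ) (Om Omb : Set (Euc d)) : Prop :=
  (∀ x₀ ∈ closure Om, Set.InjOn (fun y => -Dc c x₀ y) (closure Omb)) ∧
  (∀ y₀ ∈ closure Omb, Set.InjOn (fun x => -Dbc c x y₀) (closure Om))

/-- Partial derivative in the i-th coordinate of the first variable. -/
def pd1 {d : ℕ} (c : Euc d → Euc d → ℝ) (i : Fin d) : Euc d → Euc d → ℝ :=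
  fun x y => fderiv ℝ (fun x' => c x' y) x (EuclideanSpace.single i 1)

/-- Partial derivative in the j-th coordinate of the second variable. -/
def pd2 {d : ℕ} (c : Euc d → Euc d → ℝ) (j : Fin d) : Euc d → Euc d → ℝ :=
  fun x y => fderiv ℝ (fun y' => c x y') y (EuclideanSpace.single j 1)

/-- The matrix −∂²c/∂xⁱ∂x̄ʲ (i.e. −DD̄c). -/
def negMixed {d : ℕ} (c : Euc d → Euc d → ℝ) (x y : Euc d) : Matrix (Fin d) (Fin d) ℝ :=
  Matrix.of fun i j => -(pd1 (pd2 c j) i x y)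

/-- The mixed Hessian c_{r,s̄}. -/
def mixedHess {d : ℕ} (c : Euc d → Euc d → ℝ) (x y : Euc d) : Matrix (Fin d) (Fin d) ℝ :=
  Matrix.of fun r s => pd2 (pd1 c r) s x y

/-- (Nondeg): the mixed second-derivative matrix is invertible on cl(Ω) × cl(Ω̄). -/
def Nondeg {d : ℕ} (c : Euc d → Euc d → ℝ) (Om Omb : Set (Euc d)) : Prop :=
  ∀ x ∈ closure Om, ∀ y ∈ closure Omb, (negMixed c x y).det ≠ 0

/-- (MTW₊): the strong Ma–Trudinger–Wang condition. -/
def MTWplus {d : ℕ} (c : Euc d → Euc d → ℝ) (Om Omb : Set (Euc d)) : Prop :=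
  ∃ δ₀ > (0:ℝ), ∀ x ∈ closure Om, ∀ y ∈ closure Omb, ∀ V η : Euc d,
    (inner ℝ η V : ℝ) = 0 →
      δ₀ * ‖V‖ ^ 2 * ‖η‖ ^ 2 ≤
        ∑ i, ∑ j, ∑ k, ∑ l,
          (-(pd1 (pd1 (pd2 (pd1 c i) j) l) k x y) +
              ∑ r, ∑ s,
                pd2 (pd2 (pd1 c i) j) s x y * (mixedHess c x y)⁻¹ s r *
                  pd1 (pd1 (pd1 c r) l) k x y) *
            V i * V j * η k * η l

/-- c-convexity: Ω is c-convex w.r.t. every x̄ᵢ, and Ω̄ is c-convex w.r.t. every x ∈ Ω. -/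
def CConvexAssumptions {d K : ℕ} (c : Euc d → Euc d → ℝ) (Om Omb : Set (Euc d))
    (xb : Fin K → Euc d) : Prop :=
  (∀ i, Convex ℝ ((fun x => -Dbc c x (xb i)) '' Om)) ∧
  (∀ x ∈ Om, Convex ℝ ((fun y => -Dc c x y) '' Omb))

/-- The measure μ = I · (Lebesgue restricted to Ω). -/
def muM {d : ℕ} (Om : Set (Euc d)) (I : Euc d → ℝ) : Measure (Euc d) :=
  (volume.restrict Om).withDensity fun x => ENNReal.ofReal (I x)

/-- φ_d(x) = max_i (−c(x,x̄ᵢ) − log dᵢ). -/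
def phiF {d K : ℕ} (c : Euc d → Euc d → ℝ) (xb : Fin K → Euc d) (dd : Fin K → ℝ)
    (x : Euc d) : ℝ :=
  ⨆ i, (-(c x (xb i)) - Real.log (dd i))

/-- V_{d,i}. -/
def Vset {d K : ℕ} (c : Euc d → Euc d → ℝ) (Om : Set (Euc d)) (xb : Fin K → Euc d)
    (dd : Fin K → ℝ) (i : Fin K) : Set (Euc d) :=
  {x ∈ Om | ∀ k, -(c x (xb k)) - Real.log (dd k) ≤ -(c x (xb i)) - Real.log (dd i)}

/-- The visibility set vis_d(x̄ᵢ). -/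
def vis {d K : ℕ} (c : Euc d → Euc d → ℝ) (Om : Set (Euc d)) (xb : Fin K → Euc d)
    (dd : Fin K → ℝ) (i : Fin K) : Set (Euc d) :=
  {x ∈ Om | ∃ lam : ℝ, phiF c xb dd x = -(c x (xb i)) + lam ∧
      ∀ x' ∈ Om, -(c x' (xb i)) + lam ≤ phiF c xb dd x'}

/-- G^i(d) = μ(vis_d(x̄ᵢ)). -/
def G {d K : ℕ} (c : Euc d → Euc d → ℝ) (Om : Set (Euc d)) (I : Euc d → ℝ)
    (xb : Fin K → Euc d) (dd : Fin K → ℝ) (i : Fin K) : ℝ :=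
  (muM Om I (vis c Om xb dd i)).toReal

/-- W_{i,j,d}. -/
def Wset {d K : ℕ} (c : Euc d → Euc d → ℝ) (Om : Set (Euc d)) (xb : Fin K → Euc d)
    (dd : Fin K → ℝ) (i j : Fin K) : Set (Euc d) :=
  {x ∈ Om | -(c x (xb j)) - Real.log (dd j) ≤ -(c x (xb i)) - Real.log (dd i)}

/-- The c-exponential map at y: the inverse on Ω of x ↦ −D̄c(x,y). -/
def cexp {d : ℕ} (c : Euc d → Euc d → ℝ) (Om : Set (Euc d)) (y : Euc d) :
    Euc d → Euc d :=
  Function.invFunOn (fun x => -Dbc c x y) Om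

/-- c̃_{k,i}(p) = c(Xᵢ(p), x̄_k) − c(Xᵢ(p), x̄ᵢ). -/
def ctilde {d : ℕ} (c : Euc d → Euc d → ℝ) (Om : Set (Euc d)) (yk yi : Euc d)
    (p : Euc d) : ℝ :=
  c (cexp c Om yi p) yk - c (cexp c Om yi p) yi

/-- The set U_{k,d,Δd}. -/
def Uset {d K : ℕ} (c : Euc d → Euc d → ℝ) (Om : Set (Euc d)) (xb : Fin K → Euc d)
    (dd Δ : Fin K → ℝ) (i k : Fin K) : Set (Euc d) :=
  if 0 ≤ Δ k then
    {p ∈ (fun x => -Dbc c x (xb i)) '' Om |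
        -(ctilde c Om (xb k) (xb i) p) = Real.log (dd k) - Real.log (dd i)} ∩
      ((fun x => -Dbc c x (xb i)) '' ⋂ (l) (_ : l ≠ k), Wset c Om xb (dd + Δ) i l)
  else
    {p ∈ (fun x => -Dbc c x (xb i)) '' Om |
        -(ctilde c Om (xb k) (xb i) p) = Real.log (dd k + Δ k) - Real.log (dd i)} ∩
      ((fun x => -Dbc c x (xb i)) '' ⋂ (l) (_ : l ≠ k), Wset c Om xb dd i l)

/-- β_{i,k,Δd}. -/
def betaI {d K : ℕ} (c : Euc d → Euc d → ℝ) (Om : Set (Euc d)) (I : Euc d → ℝ)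
    (xb : Fin K → Euc d) (dd Δ : Fin K → ℝ) (i k : Fin K) : ℝ :=
  ∫ p in Uset c Om xb dd Δ i k,
    I (cexp c Om (xb i) p) * ‖gradient (ctilde c Om (xb k) (xb i)) p‖⁻¹ *
      |(fderiv ℝ (cexp c Om (xb i)) p).det| ∂(μH[(d : ℝ) - 1])

/-- The constant C of the paper. -/
def Cconst {d K : ℕ} (c : Euc d → Euc d → ℝ) (Om : Set (Euc d)) (xb : Fin K → Euc d) : ℝ :=
  sSup {r : ℝ | ∃ k l : Fin K, k ≠ l ∧ ∃ x ∈ Om,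
    r = |(negMixed c x (xb l)).det| /
        ‖(EuclideanSpace.equiv (Fin d) ℝ).symm
            ((negMixed c x (xb l))⁻¹.mulVec
              fun m => (-(Dc c x (xb l)) + Dc c x (xb k)) m)‖}

/-- T(x) = x̄ᵢ for the least index i with x ∈ V_{d,i} (junk value 0 otherwise). -/
def Tmap {d K : ℕ} (c : Euc d → Euc d → ℝ) (Om : Set (Euc d)) (xb : Fin K → Euc d)
    (dd : Fin K → ℝ) (x : Euc d) : Euc d :=
  if h : ∃ k, x ∈ Vset c Om xb dd k then xb (Fin.find (fun i => x ∈ Vset c Om xb dd i) h)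
  else 0

/-- Auxiliary: level sets of a `C⁴` function with nonvanishing derivative are Lebesgue-null. -/
lemma levelset_null {d : ℕ} {Om : Set (Euc d)} (hOm : IsOpen Om)
    {u : Euc d → ℝ} (hu : ContDiffOn ℝ 4 u Om)
    (hu' : ∀ x ∈ Om, fderiv ℝ u x ≠ 0) (b : ℝ) :
    volume {x ∈ Om | u x = b} = 0 := by
  classical
  set L : Set (Euc d) := {x ∈ Om | u x = b} with hL
  have hcover : L ⊆ ⋃ j : Fin d, {x ∈ L | fderiv ℝ u x (EuclideanSpace.single j 1) ≠ 0} := by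
    intro x hx
    by_contra hc
    simp only [mem_iUnion, mem_setOf_eq, not_exists, not_and, not_not] at hc
    apply hu' x hx.1
    have hzero : ∀ j : Fin d, fderiv ℝ u x (EuclideanSpace.single j 1) = 0 :=
      fun j => hc j hx
    have hlin : (fderiv ℝ u x : Euc d →ₗ[ℝ] ℝ) = 0 := by
      apply Module.Basis.ext (EuclideanSpace.basisFun (Fin d) ℝ).toBasis
      intro j
      rw [OrthonormalBasis.coe_toBasis, EuclideanSpace.basisFun_apply]
      simpa using hzero j
    exact ContinuousLinearMap.coe_injective (by simpa using hlin)
  refine measure_mono_null hcover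
    (le_antisymm (le_trans (measure_iUnion_le _) ?_) (zero_le))
  have hj : ∀ j : Fin d,
      volume {x ∈ L | fderiv ℝ u x (EuclideanSpace.single j 1) ≠ 0} = 0 := by
    intro j
    set e : Euc d := EuclideanSpace.single j 1 with he
    set Lj : Set (Euc d) := {x ∈ L | fderiv ℝ u x e ≠ 0} with hLj
    set Wm : Euc d → Euc d :=
      fun x => x + ((b - u x) * ((fderiv ℝ u x) e)⁻¹) • e with hWm
    have himg : Wm '' Lj = Lj := by
      have hfix : ∀ x ∈ Lj, Wm x = x := by
        intro x hx
        simp only [hWm, hx.1.2, sub_self, zero_mul, zero_smul, add_zero]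
      rw [Set.image_congr hfix, Set.image_id']
    have key : ∀ x ∈ Lj, HasFDerivAt Wm (fderiv ℝ Wm x) x ∧ (fderiv ℝ Wm x).det = 0 := by
      rintro x ⟨⟨hxOm, hub⟩, hne⟩
      have hu1 : DifferentiableAt ℝ u x :=
        (hu.differentiableOn (by norm_num)).differentiableAt (hOm.mem_nhds hxOm)
      have hU : HasFDerivAt u (fderiv ℝ u x) x := hu1.hasFDerivAt
      have hD1 : DifferentiableAt ℝ (fun y => fderiv ℝ u y) x :=
        (((hu.fderiv_of_isOpen hOm (m := 1) (by norm_num)).differentiableOn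
          (by norm_num)).differentiableAt (hOm.mem_nhds hxOm) : _)
      have hApp : DifferentiableAt ℝ (fun y => fderiv ℝ u y e) x :=
        hD1.clm_apply (differentiableAt_const e)
      have hv : DifferentiableAt ℝ (fun y => ((fderiv ℝ u y) e)⁻¹) x := hApp.inv hne
      have hp : HasFDerivAt (fun y => b - u y) (0 - fderiv ℝ u x) x :=
        (hasFDerivAt_const b x).sub hU
      have hmul : HasFDerivAt (fun y => (b - u y) * ((fderiv ℝ u y) e)⁻¹)
          ((b - u x) • (fderiv ℝ (fun y => ((fderiv ℝ u y) e)⁻¹) x)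
            + ((fderiv ℝ u x) e)⁻¹ • (0 - fderiv ℝ u x)) x :=
        hp.mul hv.hasFDerivAt
      have hW : HasFDerivAt Wm
          (ContinuousLinearMap.id ℝ (Euc d) +
            ((b - u x) • (fderiv ℝ (fun y => ((fderiv ℝ u y) e)⁻¹) x)
              + ((fderiv ℝ u x) e)⁻¹ • (0 - fderiv ℝ u x)).smulRight e) x :=
        (hasFDerivAt_id x).add (hmul.smul_const e)
      have happe : (ContinuousLinearMap.id ℝ (Euc d) +
            ((b - u x) • (fderiv ℝ (fun y => ((fderiv ℝ u y) e)⁻¹) x)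
              + ((fderiv ℝ u x) e)⁻¹ • (0 - fderiv ℝ u x)).smulRight e) e = 0 := by
        simp [hub, ContinuousLinearMap.smulRight_apply, inv_mul_cancel₀ hne]
      have hfd := hW.fderiv
      rw [hfd]
      refine ⟨hfd ▸ hW, ?_⟩
      by_contra hdet
      have hinj := (ContinuousLinearMap.toContinuousLinearEquivOfDetNeZero _ hdet).injective
      have h0 : e = 0 := by
        apply hinj
        rw [ContinuousLinearMap.toContinuousLinearEquivOfDetNeZero_apply,
          ContinuousLinearMap.toContinuousLinearEquivOfDetNeZero_apply, happe, map_zero]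
      have hnorm : ‖e‖ = 1 := by
        rw [he, EuclideanSpace.norm_single]; norm_num
      rw [h0, norm_zero] at hnorm
      norm_num at hnorm
    rw [← himg]
    exact MeasureTheory.addHaar_image_eq_zero_of_det_fderivWithin_eq_zero volume
      (f' := fun x => fderiv ℝ Wm x)
      (fun x hx => ((key x hx).1).hasFDerivWithinAt) (fun x hx => (key x hx).2)
  simpa using fun j => hj j

theorem statement16
    {d K : ℕ} (hd : 1 ≤ d) (hK : 2 ≤ K)
    (c : Euc d → Euc d → ℝ) (Om Omb : Set (Euc d))
    (hOmOpen : IsOpen Om) (hOmBdd : Bornology.IsBounded Om)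
    (hOmbOpen : IsOpen Omb) (hOmbBdd : Bornology.IsBounded Omb)
    (hReg : Reg c Om Omb) (hTwist : Twist c Om Omb)
    (xb : Fin K → Euc d) (hxbmem : ∀ i, xb i ∈ Omb) (hxbinj : Function.Injective xb)
    (I : Euc d → ℝ) (hIsmooth : ContDiffOn ℝ (⊤ : ℕ∞) I (closure Om))
    (hIpos : ∀ x ∈ closure Om, 0 < I x) (hInorm : (∫ x in Om, I x) = 1)
    (hNondeg : Nondeg c Om Omb) (hMTW : MTWplus c Om Omb)
    (hcconv : CConvexAssumptions c Om Omb xb)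
    (i : Fin K) (dd : Fin K → ℝ) (hdd : ∀ k, 0 < dd k)
    (f δ : ℝ) (hf0 : 0 < f) (hf1 : f < 1) (hδ : 0 < δ)
    (hG : G c Om I xb dd i ≤ f - δ) :
    ∃ dbar : ℝ, 0 < dbar ∧ dbar < dd i ∧
      f < G c Om I xb (Function.update dd i dbar) i ∧
      G c Om I xb (Function.update dd i dbar) i < f + δ := by
  classical
  haveI : Nonempty (Fin K) := ⟨i⟩
  have hOmcl : IsCompact (closure Om) := hOmBdd.isCompact_closure
  have hOmMeas : MeasurableSet Om := hOmOpen.measurableSet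
  set μ := muM Om I with hμdef
  -- partial cost maps are C⁴ on the closure of Ω
  have hcck : ∀ k : Fin K, ContDiffOn ℝ 4 (fun x => c x (xb k)) (closure Om) := by
    intro k
    have : ContDiffOn ℝ 4
        ((fun p : Euc d × Euc d => c p.1 p.2) ∘ (fun x : Euc d => (x, xb k)))
        (closure Om) :=
      hReg.comp ((contDiff_id.prodMk contDiff_const).contDiffOn)
        (fun x hx => ⟨hx, subset_closure (hxbmem k)⟩)
    exact this
  have hcont : ∀ k, ContinuousOn (fun x => c x (xb k)) (closure Om) :=
    fun k => (hcck k).continuousOn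
  -- the auxiliary function h
  obtain ⟨k₀, hk₀⟩ : ∃ k : Fin K, k ≠ i := by
    have hcard : 1 < Fintype.card (Fin K) := by simp; omega
    exact Fintype.exists_ne_of_one_lt_card hcard i
  have hKne : (Finset.univ.erase i).Nonempty :=
    ⟨k₀, Finset.mem_erase.2 ⟨hk₀, Finset.mem_univ _⟩⟩
  set h : Euc d → ℝ := fun x => (Finset.univ.erase i).sup' hKne
      (fun k => c x (xb i) - c x (xb k) - Real.log (dd k)) with hhdef
  have hhcont : ContinuousOn h (closure Om) := by
    intro x hx
    exact Filter.Tendsto.finset_sup'_nhds_apply hKne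
      (fun k _ => (((hcont i).sub (hcont k)).sub continuousOn_const) x hx)
  -- sublevel sets
  set S : ℝ → Set (Euc d) := fun s => {x ∈ Om | h x ≤ s} with hSdef
  have hSsub : ∀ {s s' : ℝ}, s ≤ s' → S s ⊆ S s' :=
    fun hss' x hx => ⟨hx.1, hx.2.trans hss'⟩
  have hSmeas : ∀ s, MeasurableSet (S s) := by
    intro s
    have ho : IsOpen (Om ∩ h ⁻¹' Set.Ioi s) :=
      (hhcont.mono subset_closure).isOpen_inter_preimage hOmOpen isOpen_Ioi
    have hrw : S s = Om \ (Om ∩ h ⁻¹' Set.Ioi s) := by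
      ext x
      simp only [hSdef, Set.mem_setOf_eq, Set.mem_diff, Set.mem_inter_iff,
        Set.mem_preimage, Set.mem_Ioi, not_and, not_lt]
      constructor
      · rintro ⟨h1, h2⟩; exact ⟨h1, fun _ => h2⟩
      · rintro ⟨h1, h2⟩; exact ⟨h1, h2 h1⟩
    rw [hrw]; exact hOmMeas.diff ho.measurableSet
  -- basic measure facts
  have hIint : IntegrableOn I Om volume :=
    (hIsmooth.continuousOn.integrableOn_compact hOmcl).mono_set subset_closure
  have hIae : 0 ≤ᵐ[volume.restrict Om] I :=
    ae_restrict_of_forall_mem hOmMeas (fun x hx => (hIpos x (subset_closure hx)).le)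
  have hA1 : ∫⁻ x, ENNReal.ofReal (I x) ∂(volume.restrict Om) = 1 := by
    rw [← MeasureTheory.ofReal_integral_eq_lintegral_ofReal hIint hIae, hInorm,
      ENNReal.ofReal_one]
  have hμuniv : μ Set.univ = 1 := by
    rw [hμdef, muM, MeasureTheory.withDensity_apply _ MeasurableSet.univ,
      Measure.restrict_univ]
    exact hA1
  have hfinμ : ∀ A : Set (Euc d), μ A ≠ ∞ := fun A =>
    ((measure_mono (Set.subset_univ A)).trans_lt
      (by rw [hμuniv]; exact ENNReal.one_lt_top)).ne
  have hμOm : μ Om = 1 := by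
    rw [hμdef, muM, MeasureTheory.withDensity_apply _ hOmMeas]
    rw [show (∫⁻ x in Om, ENNReal.ofReal (I x) ∂(volume.restrict Om))
        = ∫⁻ x, ENNReal.ofReal (I x) ∂((volume.restrict Om).restrict Om) from rfl,
      Measure.restrict_restrict hOmMeas, Set.inter_self]
    exact hA1
  -- level sets of h are μ-null
  have hnull : ∀ b : ℝ, μ {x ∈ Om | h x = b} = 0 := by
    intro b
    have hsub : {x ∈ Om | h x = b} ⊆ ⋃ k ∈ Finset.univ.erase i,
        {x ∈ Om | c x (xb i) - c x (xb k) = b + Real.log (dd k)} := by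
      intro x hx
      obtain ⟨k, hk, hkeq⟩ := Finset.exists_mem_eq_sup' hKne
        (fun k => c x (xb i) - c x (xb k) - Real.log (dd k))
      have hxb : h x = c x (xb i) - c x (xb k) - Real.log (dd k) := hkeq
      refine Set.mem_biUnion hk ⟨hx.1, ?_⟩
      have := hx.2
      rw [hxb] at this
      linarith
    refine measure_mono_null hsub (le_antisymm ((measure_biUnion_finset_le _ _).trans
      (le_of_eq (Finset.sum_eq_zero ?_))) (zero_le))
    intro k hk
    have hk' : k ≠ i := (Finset.mem_erase.1 hk).1
    have hvol : volume {x ∈ Om | c x (xb i) - c x (xb k) = b + Real.log (dd k)} = 0 := by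
      have hudiff : ContDiffOn ℝ 4 (fun x => c x (xb i) - c x (xb k)) Om :=
        (((hcck i).mono subset_closure).sub ((hcck k).mono subset_closure))
      refine levelset_null hOmOpen hudiff ?_ _
      intro x hxOm
      have hdi : DifferentiableAt ℝ (fun x' => c x' (xb i)) x :=
        (((hcck i).mono subset_closure).differentiableOn
          (by norm_num)).differentiableAt (hOmOpen.mem_nhds hxOm)
      have hdk : DifferentiableAt ℝ (fun x' => c x' (xb k)) x :=
        (((hcck k).mono subset_closure).differentiableOn
          (by norm_num)).differentiableAt (hOmOpen.mem_nhds hxOm)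
      have hfd : fderiv ℝ (fun x' => c x' (xb i) - c x' (xb k)) x
          = fderiv ℝ (fun x' => c x' (xb i)) x - fderiv ℝ (fun x' => c x' (xb k)) x :=
        fderiv_sub hdi hdk
      rw [hfd]
      intro hzero
      have heq : fderiv ℝ (fun x' => c x' (xb i)) x
          = fderiv ℝ (fun x' => c x' (xb k)) x := sub_eq_zero.1 hzero
      have hg : Dc c x (xb i) = Dc c x (xb k) := by
        unfold Dc gradient
        rw [heq]
      have hik : xb i = xb k := by
        apply hTwist.1 x (subset_closure hxOm) (subset_closure (hxbmem i))
          (subset_closure (hxbmem k))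
        simp only [hg]
      exact hk' (hxbinj hik.symm)
    have hres : (volume.restrict Om)
        {x ∈ Om | c x (xb i) - c x (xb k) = b + Real.log (dd k)} = 0 := by
      rw [Measure.restrict_apply' hOmMeas]
      exact measure_mono_null Set.inter_subset_left hvol
    exact (withDensity_absolutelyContinuous _ _) hres
  -- the value of φ + c(·, x̄ᵢ) for updated weights
  have hphi : ∀ t : ℝ, 0 < t → ∀ x : Euc d,
      phiF c xb (Function.update dd i t) x + c x (xb i)
        = max (-Real.log t) (h x) := by
    intro t _ x
    set a : Fin K → ℝ := fun k => -(c x (xb k)) - Real.log (Function.update dd i t k)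
      with hadef
    have hbdd : BddAbove (Set.range a) := (Set.finite_range a).bddAbove
    have hphix : phiF c xb (Function.update dd i t) x = ⨆ k, a k := rfl
    rw [hphix]
    apply le_antisymm
    · have hles : ∀ k, a k ≤ max (-Real.log t) (h x) - c x (xb i) := by
        intro k
        rcases eq_or_ne k i with rfl | hk
        · have hai : a k = -(c x (xb k)) - Real.log t := by
            rw [hadef]; simp
          rw [hai]
          have := le_max_left (-Real.log t) (h x)
          linarith
        · have hak : a k = -(c x (xb k)) - Real.log (dd k) := by
            rw [hadef]; simp [Function.update_of_ne hk]
          rw [hak]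
          have hle : c x (xb i) - c x (xb k) - Real.log (dd k) ≤ h x :=
            Finset.le_sup' (fun k => c x (xb i) - c x (xb k) - Real.log (dd k))
              (Finset.mem_erase.2 ⟨hk, Finset.mem_univ _⟩)
          have := le_max_right (-Real.log t) (h x)
          linarith
      have := ciSup_le hles
      linarith
    · apply max_le
      · have h1 : a i ≤ ⨆ k, a k := le_ciSup hbdd i
        have hai : a i = -(c x (xb i)) - Real.log t := by rw [hadef]; simp
        linarith
      · have h2 : h x ≤ (⨆ k, a k) + c x (xb i) := by
          apply Finset.sup'_le
          intro k hk
          have hk' : k ≠ i := (Finset.mem_erase.1 hk).1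
          have h1 : a k ≤ ⨆ k, a k := le_ciSup hbdd k
          have hak : a k = -(c x (xb k)) - Real.log (dd k) := by
            rw [hadef]; simp [Function.update_of_ne hk']
          linarith
        exact h2
  -- characterization of vis as the set of minimizers
  have hvischar : ∀ dd' : Fin K → ℝ, vis c Om xb dd' i =
      {x ∈ Om | ∀ x' ∈ Om,
        phiF c xb dd' x + c x (xb i) ≤ phiF c xb dd' x' + c x' (xb i)} := by
    intro dd'
    ext x
    simp only [vis, Set.mem_setOf_eq]
    constructor
    · rintro ⟨hxOm, lam, hlam, hall⟩
      refine ⟨hxOm, fun x' hx' => ?_⟩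
      have h1 := hall x' hx'
      have h2 : phiF c xb dd' x + c x (xb i) = lam := by rw [hlam]; ring
      linarith
    · rintro ⟨hxOm, hall⟩
      refine ⟨hxOm, phiF c xb dd' x + c x (xb i), by ring, fun x' hx' => ?_⟩
      have := hall x' hx'
      linarith
  -- vis equals a sublevel set when the sublevel set is nonempty
  have hvis_eq : ∀ t : ℝ, 0 < t → (∃ x ∈ Om, h x ≤ -Real.log t) →
      vis c Om xb (Function.update dd i t) i = S (-Real.log t) := by
    intro t ht hex
    obtain ⟨x₀, hx₀Om, hx₀⟩ := hex
    rw [hvischar]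
    ext x
    simp only [hSdef, Set.mem_setOf_eq]
    constructor
    · rintro ⟨hxOm, hall⟩
      refine ⟨hxOm, ?_⟩
      have h1 := hall x₀ hx₀Om
      rw [hphi t ht x, hphi t ht x₀, max_eq_left hx₀] at h1
      exact (le_max_right (-Real.log t) (h x)).trans h1
    · rintro ⟨hxOm, hx⟩
      refine ⟨hxOm, fun x' hx' => ?_⟩
      rw [hphi t ht x, hphi t ht x', max_eq_left hx]
      exact le_max_left _ _
  -- F(s₀) ≤ f
  set s₀ : ℝ := -Real.log (dd i) with hs₀def
  have hFs0 : μ (S s₀) ≤ ENNReal.ofReal f := by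
    by_cases hex : ∃ x ∈ Om, h x ≤ s₀
    · have hveq := hvis_eq (dd i) (hdd i) hex
      rw [Function.update_eq_self] at hveq
      have hGeq : G c Om I xb dd i = (μ (S s₀)).toReal := by
        show (muM Om I (vis c Om xb dd i)).toReal = _
        rw [hveq, ← hμdef]
      rw [hGeq] at hG
      exact (ENNReal.le_ofReal_iff_toReal_le (hfinμ _) hf0.le).2 (by linarith)
    · push_neg at hex
      have hSe : S s₀ = ∅ := by
        ext x
        simp only [hSdef, Set.mem_setOf_eq, Set.mem_empty_iff_false, iff_false, not_and,
          not_le]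
        exact fun hxOm => hex x hxOm
      rw [hSe, measure_empty]
      exact zero_le
  -- upper bound for the family A
  obtain ⟨s₁, hs₁⟩ : ∃ s₁ : ℝ, ∀ x ∈ Om, h x ≤ s₁ := by
    obtain ⟨C, hC⟩ := hOmcl.exists_bound_of_continuousOn hhcont
    exact ⟨C, fun x hx => (le_abs_self _).trans
      (by rw [← Real.norm_eq_abs]; exact hC x (subset_closure hx))⟩
  set A : Set ℝ := {s : ℝ | μ (S s) ≤ ENNReal.ofReal f} with hAdef
  have hs₀A : s₀ ∈ A := hFs0
  have hAub : ∀ s ∈ A, s ≤ s₁ := by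
    intro s hs
    by_contra hlt
    push_neg at hlt
    have hSOm : S s = Om := by
      ext x
      simp only [hSdef, Set.mem_setOf_eq]
      exact ⟨fun hx => hx.1, fun hx => ⟨hx, (hs₁ x hx).trans hlt.le⟩⟩
    have hs' : (1 : ℝ≥0∞) ≤ ENNReal.ofReal f := by
      rw [← hμOm, ← hSOm]; exact hs
    have hlt1 : ENNReal.ofReal f < 1 := by
      rw [← ENNReal.ofReal_one]
      exact (ENNReal.ofReal_lt_ofReal_iff one_pos).2 hf1
    exact absurd hs' (not_le.2 hlt1)
  have hAne : A.Nonempty := ⟨s₀, hs₀A⟩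
  have hAbdd : BddAbove A := ⟨s₁, hAub⟩
  set sstar : ℝ := sSup A with hsstardef
  have hs₀star : s₀ ≤ sstar := le_csSup hAbdd hs₀A
  -- μ (S s*) ≤ ofReal f
  have hstar : μ (S sstar) ≤ ENNReal.ofReal f := by
    have hsplit : S sstar ⊆ {x ∈ Om | h x < sstar} ∪ {x ∈ Om | h x = sstar} := by
      intro x hx
      rcases lt_or_eq_of_le hx.2 with hlt | heq
      · exact Or.inl ⟨hx.1, hlt⟩
      · exact Or.inr ⟨hx.1, heq⟩
    have h1 : μ {x ∈ Om | h x < sstar} ≤ ENNReal.ofReal f := by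
      have hun : (⋃ n : ℕ, S (sstar - 1 / (n + 1))) = {x ∈ Om | h x < sstar} := by
        ext x
        simp only [Set.mem_iUnion, hSdef, Set.mem_setOf_eq]
        constructor
        · rintro ⟨n, hxOm, hle⟩
          have hpos : (0 : ℝ) < 1 / ((n : ℝ) + 1) := by positivity
          exact ⟨hxOm, by linarith⟩
        · rintro ⟨hxOm, hlt⟩
          obtain ⟨n, hn⟩ := exists_nat_one_div_lt (sub_pos.2 hlt)
          exact ⟨n, hxOm, by linarith⟩
      have hmon : Monotone (fun n : ℕ => S (sstar - 1 / (n + 1))) := by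
        intro n m hnm
        apply hSsub
        have h1 : (1 : ℝ) / ((m : ℝ) + 1) ≤ 1 / ((n : ℝ) + 1) := by
          apply one_div_le_one_div_of_le (by positivity)
          have := (Nat.cast_le (α := ℝ)).2 hnm
          linarith
        linarith
      rw [← hun, hmon.measure_iUnion]
      apply iSup_le
      intro n
      have hlt : sstar - 1 / ((n : ℝ) + 1) < sstar := by
        have : (0 : ℝ) < 1 / ((n : ℝ) + 1) := by positivity
        linarith
      obtain ⟨a, haA, hagt⟩ := exists_lt_of_lt_csSup hAne hlt
      exact (measure_mono (hSsub hagt.le)).trans haA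
    calc μ (S sstar) ≤ μ ({x ∈ Om | h x < sstar} ∪ {x ∈ Om | h x = sstar}) :=
          measure_mono hsplit
      _ ≤ μ {x ∈ Om | h x < sstar} + μ {x ∈ Om | h x = sstar} := measure_union_le _ _
      _ = μ {x ∈ Om | h x < sstar} := by rw [hnull sstar, add_zero]
      _ ≤ ENNReal.ofReal f := h1
  -- continuity from above to find s' slightly above s*
  have hinter : (⋂ n : ℕ, S (sstar + 1 / (n + 1))) = S sstar := by
    ext x
    simp only [Set.mem_iInter, hSdef, Set.mem_setOf_eq]
    constructor
    · intro hall
      have hxOm := (hall 0).1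
      refine ⟨hxOm, ?_⟩
      by_contra hgt
      push_neg at hgt
      obtain ⟨n, hn⟩ := exists_nat_one_div_lt (sub_pos.2 hgt)
      have := (hall n).2
      linarith
    · rintro ⟨hxOm, hle⟩ n
      have hpos : (0 : ℝ) < 1 / ((n : ℝ) + 1) := by positivity
      exact ⟨hxOm, by linarith⟩
  have hanti : Antitone (fun n : ℕ => S (sstar + 1 / (n + 1))) := by
    intro n m hnm
    apply hSsub
    have h1 : (1 : ℝ) / ((m : ℝ) + 1) ≤ 1 / ((n : ℝ) + 1) := by
      apply one_div_le_one_div_of_le (by positivity)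
      have := (Nat.cast_le (α := ℝ)).2 hnm
      linarith
    linarith
  have htend : Tendsto (fun n : ℕ => μ (S (sstar + 1 / (n + 1)))) atTop
      (𝓝 (μ (S sstar))) := by
    have ht := tendsto_measure_iInter_atTop (μ := μ)
      (s := fun n : ℕ => S (sstar + 1 / (n + 1)))
      (fun n => (hSmeas _).nullMeasurableSet) hanti ⟨0, hfinμ _⟩
    rw [hinter] at ht
    exact ht
  have hlt2 : μ (S sstar) < ENNReal.ofReal (f + δ) :=
    hstar.trans_lt ((ENNReal.ofReal_lt_ofReal_iff (by linarith)).2 (by linarith))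
  obtain ⟨n, hn⟩ := (htend.eventually_lt_const hlt2).exists
  set s' : ℝ := sstar + 1 / (n + 1) with hs'def
  have hs'gt : sstar < s' := by
    have : (0 : ℝ) < 1 / ((n : ℝ) + 1) := by positivity
    rw [hs'def]; linarith
  have hs'notA : s' ∉ A := fun hmem => absurd (le_csSup hAbdd hmem) (not_le.2 hs'gt)
  have hfs' : ENNReal.ofReal f < μ (S s') := by
    by_contra hle
    exact hs'notA (not_lt.1 hle)
  have hn' : μ (S s') < ENNReal.ofReal (f + δ) := hn
  have hSne : ∃ x ∈ Om, h x ≤ s' := by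
    by_contra hempty
    push_neg at hempty
    have hSe : S s' = ∅ := by
      ext x
      simp only [hSdef, Set.mem_setOf_eq, Set.mem_empty_iff_false, iff_false, not_and,
        not_le]
      exact fun hxOm => hempty x hxOm
    rw [hSe, measure_empty] at hfs'
    exact absurd hfs' (not_lt.2 (zero_le))
  -- assemble the final answer
  have hlog : -Real.log (Real.exp (-s')) = s' := by rw [Real.log_exp]; ring
  have hveq := hvis_eq (Real.exp (-s')) (Real.exp_pos _) (by rw [hlog]; exact hSne)
  rw [hlog] at hveq
  have hGeq : G c Om I xb (Function.update dd i (Real.exp (-s'))) i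
      = (μ (S s')).toReal := by
    show (muM Om I (vis c Om xb (Function.update dd i (Real.exp (-s'))) i)).toReal = _
    rw [hveq, ← hμdef]
  refine ⟨Real.exp (-s'), Real.exp_pos _, ?_, ?_, ?_⟩
  · have h1 : -s' < Real.log (dd i) := by
      have h2 : s₀ < s' := lt_of_le_of_lt hs₀star hs'gt
      rw [hs₀def] at h2
      linarith
    calc Real.exp (-s') < Real.exp (Real.log (dd i)) := Real.exp_lt_exp.2 h1
      _ = dd i := Real.exp_log (hdd i)
  · rw [hGeq]
    have h1 : (ENNReal.ofReal f).toReal < (μ (S s')).toReal :=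
      (ENNReal.toReal_lt_toReal ENNReal.ofReal_ne_top (hfinμ _)).2 hfs'
    rwa [ENNReal.toReal_ofReal hf0.le] at h1
  · rw [hGeq]
    have h1 : (μ (S s')).toReal < (ENNReal.ofReal (f + δ)).toReal :=
      (ENNReal.toReal_lt_toReal (hfinμ _) ENNReal.ofReal_ne_top).2 hn'
    rwa [ENNReal.toReal_ofReal (by linarith)] at h1

end
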